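/- The Euler–Zagier double zeta value satisfies ζ_EZ(1,2) = ζ(3), i.e., Σ_{n=1}^∞ Σ_{m=1}^∞ 1/(n(n+m)^2) = Σ_{n=1}^∞ 1/n^3. -/

import Mathlib

/-!
Symmetrizing, `1/(n(n+m)²) + 1/(m(n+m)²) = 1/(nm(n+m)) = (1/n²)(1/m - 1/(n+m))`, and the last
bracket telescopes in `m` to the harmonic number `H_n`, so `2 ζ(1,2) = ∑ H_n / n²`. Summing instead
along the diagonals `n + m = k` gives `ζ(1,2) = ∑ H_{k-1} / k² = ∑ H_k / k² - ζ(3)`. Both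
rearrangements are justified by `1/(n(n+m)²) ≤ n^{-3/2} m^{-3/2}`.
-/

open Finset Filter Topology

theorem HasSum.sum_antidiagonal {α A : Type*} [AddCommMonoid α] [TopologicalSpace α]
    [ContinuousAdd α] [RegularSpace α] [AddCommMonoid A] [HasAntidiagonal A]
    {f : A × A → α} {a : α} (hf : HasSum f a) :
    HasSum (fun n ↦ ∑ p ∈ antidiagonal n, f p) a :=
  (HasAntidiagonal.sigmaAntidiagonalEquivProd.hasSum_iff.mpr hf).sigma fun n ↦ by
    rw [← sum_coe_sort]
    exact hasSum_fintype _

theorem Antitone.hasSum_sub_add_of_tendsto_zero {g : ℕ → ℝ} (hg : Antitone g)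
    (hlim : Tendsto g atTop (𝓝 0)) (n : ℕ) :
    HasSum (fun m ↦ g m - g (m + n)) (∑ i ∈ range n, g i) := by
  rw [hasSum_iff_tendsto_nat_of_nonneg fun m ↦ sub_nonneg.mpr (hg (m.le_add_right n))]
  have partial_sum (N : ℕ) : ∑ m ∈ range N, (g m - g (m + n)) =
      ∑ i ∈ range n, g i - ∑ i ∈ range n, g (N + i) := by
    have h₁ := sum_range_add g N n
    have h₂ := sum_range_add g n N
    simp only [sum_sub_distrib, add_comm _ n] at h₁ h₂ ⊢
    linarith
  have tail : Tendsto (fun N ↦ ∑ i ∈ range n, g (N + i)) atTop (𝓝 0) := by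
    simpa using tendsto_finsetSum (range n) fun i _ ↦ hlim.comp (tendsto_add_atTop_nat i)
  simpa [partial_sum] using tendsto_const_nhds.sub tail

theorem hasSum_one_div_sub_one_div_add (n : ℕ) :
    HasSum (fun m : ℕ+ ↦ 1 / (m : ℝ) - 1 / ((m : ℝ) + n)) (harmonic n) := by
  rw [hasSum_pnat_iff_hasSum_succ (f := fun m : ℕ ↦ 1 / (m : ℝ) - 1 / ((m : ℝ) + n))]
  have hanti : Antitone fun m : ℕ ↦ 1 / ((m : ℝ) + 1) := fun a b hab ↦
    one_div_le_one_div_of_le (by positivity) (by gcongr)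
  have hlim : Tendsto (fun m : ℕ ↦ 1 / ((m : ℝ) + 1)) atTop (𝓝 0) :=
    tendsto_one_div_add_atTop_nhds_zero_nat
  convert hanti.hasSum_sub_add_of_tendsto_zero hlim n using 1
  · ext m; push_cast; ring_nf
  · simp [harmonic, one_div]

theorem one_div_mul_mul_add_eq {x y : ℝ} (hx : x ≠ 0) (hy : y ≠ 0) (hxy : x + y ≠ 0) :
    1 / (x * y * (x + y)) = 1 / x ^ 2 * (1 / y - 1 / (y + x)) := by
  rw [add_comm y x]
  field_simp
  ring

theorem one_div_mul_add_sq_add_one_div_mul_add_sq {x y : ℝ} (hx : x ≠ 0) (hy : y ≠ 0)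
    (hxy : x + y ≠ 0) :
    1 / (x * (x + y) ^ 2) + 1 / (y * (y + x) ^ 2) = 1 / (x * y * (x + y)) := by
  rw [add_comm y x]
  field_simp
  ring

theorem one_div_mul_add_sq_le {x y : ℝ} (hx : 0 < x) (hy : 0 < y) :
    1 / (x * (x + y) ^ 2) ≤ 1 / x ^ (3 / 2 : ℝ) * (1 / y ^ (3 / 2 : ℝ)) := by
  have rpow_three_halves {z : ℝ} (hz : 0 < z) : z ^ (3 / 2 : ℝ) = z * √z := by
    rw [show (3 / 2 : ℝ) = 1 + 1 / 2 by norm_num, Real.rpow_add hz, Real.rpow_one,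
      Real.sqrt_eq_rpow]
  have hsqrt : √x * √y ≤ x + y := by
    rw [← Real.sqrt_mul hx.le, Real.sqrt_le_iff]
    constructor <;> nlinarith
  rw [div_mul_div_comm, one_mul, rpow_three_halves hx, rpow_three_halves hy]
  refine one_div_le_one_div_of_le (by positivity) ?_
  calc x * √x * (y * √y) = x * y * (√x * √y) := by ring
    _ ≤ x * y * (x + y) := by gcongr
    _ ≤ x * (x + y) * (x + y) := by gcongr; linarith
    _ = x * (x + y) ^ 2 := by ring

theorem summable_one_div_mul_add_sq :
    Summable fun p : ℕ+ × ℕ+ ↦ 1 / ((p.1 : ℝ) * ((p.1 : ℝ) + (p.2 : ℝ)) ^ 2) := by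
  have h : Summable fun n : ℕ+ ↦ 1 / (n : ℝ) ^ (3 / 2 : ℝ) :=
    summable_pnat_iff_summable_nat.mpr (Real.summable_one_div_nat_rpow.mpr (by norm_num))
  refine .of_nonneg_of_le (fun p ↦ by positivity) (fun p ↦ ?_)
    (h.mul_of_nonneg h (fun n ↦ by positivity) (fun n ↦ by positivity))
  exact one_div_mul_add_sq_le (by positivity) (by positivity)

theorem hasSum_one_div_mul_mul_add (n : ℕ+) :
    HasSum (fun m : ℕ+ ↦ 1 / ((n : ℝ) * m * (n + m))) (harmonic n / (n : ℝ) ^ 2) := by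
  rw [← one_div_mul_eq_div]
  refine ((hasSum_one_div_sub_one_div_add n).mul_left _).congr_fun fun m ↦ ?_
  exact one_div_mul_mul_add_eq (by positivity) (by positivity) (by positivity)

theorem hasSum_one_div_mul_mul_add_of_hasSum {S : ℝ}
    (h : HasSum (fun p : ℕ+ × ℕ+ ↦ 1 / ((p.1 : ℝ) * ((p.1 : ℝ) + p.2) ^ 2)) S) :
    HasSum (fun p : ℕ+ × ℕ+ ↦ 1 / ((p.1 : ℝ) * p.2 * (p.1 + p.2))) (S + S) := by
  refine (h.add ((Equiv.prodComm ℕ+ ℕ+).hasSum_iff.mpr h)).congr_fun fun p ↦ ?_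
  exact (one_div_mul_add_sq_add_one_div_mul_add_sq (by positivity) (by positivity)
    (by positivity)).symm

theorem sum_antidiagonal_one_div_succ_mul_succ_add_succ_sq (k : ℕ) :
    ∑ p ∈ antidiagonal k, 1 / (((p.1 : ℝ) + 1) * ((p.1 : ℝ) + 1 + ((p.2 : ℝ) + 1)) ^ 2) =
      harmonic (k + 1) / ((k : ℝ) + 2) ^ 2 := by
  have fiber : ∀ p ∈ antidiagonal k,
      1 / (((p.1 : ℝ) + 1) * ((p.1 : ℝ) + 1 + ((p.2 : ℝ) + 1)) ^ 2) =
        1 / ((p.1 : ℝ) + 1) / ((k : ℝ) + 2) ^ 2 := by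
    intro p hp
    rw [div_div, ← mem_antidiagonal.mp hp]
    push_cast
    ring_nf
  rw [sum_congr rfl fiber, ← sum_div,
    Nat.sum_antidiagonal_eq_sum_range_succ (fun i _ ↦ 1 / ((i : ℝ) + 1))]
  simp [harmonic]

theorem hasSum_harmonic_div_succ_sq {S : ℝ}
    (h : HasSum (fun p : ℕ+ × ℕ+ ↦ 1 / ((p.1 : ℝ) * ((p.1 : ℝ) + p.2) ^ 2)) S) :
    HasSum (fun k : ℕ ↦ (harmonic k : ℝ) / ((k : ℝ) + 1) ^ 2) S := by
  rw [← hasSum_nat_add_iff' 1]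
  have h' := ((Equiv.prodCongr Equiv.pnatEquivNat.symm
    Equiv.pnatEquivNat.symm).hasSum_iff.mpr h).sum_antidiagonal
  simp only [Function.comp_def, Equiv.prodCongr_apply, Prod.map, Equiv.pnatEquivNat_symm_apply,
    Nat.succPNat_coe, Nat.cast_succ] at h'
  simp only [range_one, sum_singleton, harmonic_zero, Rat.cast_zero, zero_div, sub_zero]
  refine h'.congr_fun fun k ↦ ?_
  rw [sum_antidiagonal_one_div_succ_mul_succ_add_succ_sq]
  push_cast
  ring

theorem zetaEZ_one_two :
    ∑' p : ℕ+ × ℕ+, 1 / ((p.1 : ℝ) * ((p.1 : ℝ) + (p.2 : ℝ)) ^ 2) =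
      ∑' n : ℕ+, 1 / (n : ℝ) ^ 3 := by
  set S := ∑' p : ℕ+ × ℕ+, 1 / ((p.1 : ℝ) * ((p.1 : ℝ) + (p.2 : ℝ)) ^ 2)
  set Z := ∑' n : ℕ+, 1 / (n : ℝ) ^ 3
  have hS : HasSum (fun p : ℕ+ × ℕ+ ↦ 1 / ((p.1 : ℝ) * ((p.1 : ℝ) + p.2) ^ 2)) S :=
    summable_one_div_mul_add_sq.hasSum
  have hZ : HasSum (fun k : ℕ ↦ 1 / ((k : ℝ) + 1) ^ 3) Z := by
    have hZ' : HasSum (fun n : ℕ+ ↦ 1 / (n : ℝ) ^ 3) Z :=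
      (summable_pnat_iff_summable_nat.mpr (Real.summable_one_div_nat_pow.mpr (by norm_num))).hasSum
    simpa using (hasSum_pnat_iff_hasSum_succ (f := fun m : ℕ ↦ 1 / (m : ℝ) ^ 3)).mp hZ'
  have hdouble : HasSum (fun k : ℕ ↦ (harmonic (k + 1) : ℝ) / ((k : ℝ) + 1) ^ 2) (S + S) := by
    have hrows : HasSum (fun n : ℕ+ ↦ (harmonic n : ℝ) / (n : ℝ) ^ 2) (S + S) :=
      (hasSum_one_div_mul_mul_add_of_hasSum hS).prod_fiberwise fun n ↦ hasSum_one_div_mul_mul_add n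
    simpa using (hasSum_pnat_iff_hasSum_succ
      (f := fun m : ℕ ↦ (harmonic m : ℝ) / (m : ℝ) ^ 2)).mp hrows
  have hsplit : HasSum (fun k : ℕ ↦ (harmonic (k + 1) : ℝ) / ((k : ℝ) + 1) ^ 2) (S + Z) :=
    ((hasSum_harmonic_div_succ_sq hS).add hZ).congr_fun fun k ↦ by
      rw [harmonic_succ]
      push_cast
      field_simp
  linarith [hdouble.unique hsplit]
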